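/- arXiv:2405.01151 — 3 statements merged into one kernel-verified Lean document; each statement's English description precedes it below -/
import Mathlib

section
/- Let S be a finite multiset of integers of even cardinality. Define, for a perfect matching M of S, the metric f(M) as the number of integers j such that an odd number of pairs in M cross column j (a pair {a,b} crosses j if min(a,b) ≤ j < max(a,b)). Then f(M) takes the same value for all perfect matchings M of S. -/
/-- `M` is a perfect matching (partition into pairs) of the multiset `S`. -/
def IsPerfectMatchingOf (M : Multiset (ℤ × ℤ)) (S : Multiset ℤ) : Prop :=
  (M.bind fun p => {p.1, p.2}) = S

/-- Number of pairs of `M` crossing column `j`, i.e. with `min a b ≤ j < max a b`. -/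
def crossings (M : Multiset (ℤ × ℤ)) (j : ℤ) : ℕ :=
  Multiset.card (M.filter fun p => min p.1 p.2 ≤ j ∧ j < max p.1 p.2)

/-- The traversed-column metric: the number of columns crossed an odd number of times. -/
noncomputable def metricF (M : Multiset (ℤ × ℤ)) : ℕ :=
  {j : ℤ | Odd (crossings M j)}.ncard

theorem metric_independent_of_matching (S : Multiset ℤ) (hS : Even (Multiset.card S))
    (M₁ M₂ : Multiset (ℤ × ℤ))
    (h₁ : IsPerfectMatchingOf M₁ S) (h₂ : IsPerfectMatchingOf M₂ S) :
    metricF M₁ = metricF M₂ := by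
  have key : ∀ (M : Multiset (ℤ × ℤ)) (j : ℤ),
      crossings M j % 2 =
        Multiset.card ((M.bind fun p => ({p.1, p.2} : Multiset ℤ)).filter (· ≤ j)) % 2 := by
    intro M j
    induction M using Multiset.induction with
    | empty => simp [crossings]
    | cons p M ih =>
      rw [crossings, Multiset.filter_cons, Multiset.cons_bind, Multiset.filter_add,
        Multiset.card_add]
      have hpair : ({p.1, p.2} : Multiset ℤ) = p.1 ::ₘ p.2 ::ₘ 0 := rfl
      rw [hpair]
      rw [Multiset.filter_cons, Multiset.filter_cons, Multiset.filter_zero]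
      have hc : Multiset.card
          (if min p.1 p.2 ≤ j ∧ j < max p.1 p.2 then {p} else 0) +
          Multiset.card (Multiset.filter (fun p => min p.1 p.2 ≤ j ∧ j < max p.1 p.2) M)
          = (if min p.1 p.2 ≤ j ∧ j < max p.1 p.2 then 1 else 0) + crossings M j := by
        split <;> simp [crossings]
      rw [hc]
      have h1 : Multiset.card ((if p.1 ≤ j then ({p.1} : Multiset ℤ) else 0) +
          ((if p.2 ≤ j then ({p.2} : Multiset ℤ) else 0) + 0))
          = (if p.1 ≤ j then 1 else 0) + (if p.2 ≤ j then 1 else 0) := by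
        split <;> split <;> simp
      rw [Multiset.card_add, h1]
      have hcross : (min p.1 p.2 ≤ j ∧ j < max p.1 p.2) ↔ ((p.1 ≤ j) ↔ ¬ (p.2 ≤ j)) := by
        rw [min_le_iff, lt_max_iff]
        constructor
        · rintro ⟨h1, h2⟩
          constructor
          · intro ha hb; rcases h2 with h | h <;> omega
          · intro h; rcases h1 with h' | h' <;> [skip; omega]; tauto
        · intro h
          by_cases ha : p.1 ≤ j
          · have hb := h.mp ha; omega
          · have hb : p.2 ≤ j := by by_contra hb; exact ha (h.mpr hb)
            omega
      have hv : (if min p.1 p.2 ≤ j ∧ j < max p.1 p.2 then (1:ℕ) else 0) % 2 =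
          ((if p.1 ≤ j then (1:ℕ) else 0) + (if p.2 ≤ j then (1:ℕ) else 0)) % 2 := by
        by_cases ha : p.1 ≤ j <;> by_cases hb : p.2 ≤ j <;>
          simp [hcross, ha, hb] <;> (split <;> omega)
      omega
  have heq : ∀ j : ℤ, Odd (crossings M₁ j) ↔ Odd (crossings M₂ j) := by
    intro j
    have e1 := key M₁ j
    have e2 := key M₂ j
    rw [IsPerfectMatchingOf] at h₁ h₂
    rw [h₁] at e1; rw [h₂] at e2
    rw [Nat.odd_iff, Nat.odd_iff, e1, e2]
  unfold metricF
  congr 1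
  ext j
  simp [heq j]
end

section
/- Let x_0, x_1, ..., x_m be a finite sequence of integers with |x_{i+1} − x_i| ≤ 1 for all i (a walk on ℤ). For any integer j, the number of indices i such that {x_i, x_{i+1}} = {j, j+1} is odd if and only if min(x_0, x_m) ≤ j < max(x_0, x_m). -/
lemma pair_eq_pair_iff' {a b j : ℤ} :
    ({a, b} : Finset ℤ) = {j, j + 1} ↔ (a = j ∧ b = j + 1) ∨ (a = j + 1 ∧ b = j) := by
  constructor
  · intro h
    have ha : a ∈ ({j, j + 1} : Finset ℤ) := h ▸ Finset.mem_insert_self _ _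
    have hb : b ∈ ({j, j + 1} : Finset ℤ) := h ▸ (by simp)
    have hj : j ∈ ({a, b} : Finset ℤ) := h ▸ (by simp)
    have hj1 : j + 1 ∈ ({a, b} : Finset ℤ) := h ▸ (by simp)
    simp only [Finset.mem_insert, Finset.mem_singleton] at ha hb hj hj1
    omega
  · rintro (⟨rfl, rfl⟩ | ⟨rfl, rfl⟩)
    · rfl
    · exact Finset.pair_comm _ _

/-- A walk on ℤ crosses the column between `j` and `j+1` an odd number of times
iff `j` lies between the endpoints. -/
theorem walk_crossing_parity (m : ℕ) (x : ℕ → ℤ)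
    (hstep : ∀ i < m, |x (i + 1) - x i| ≤ 1) (j : ℤ) :
    Odd ((Finset.range m).filter
        (fun i => ({x i, x (i + 1)} : Finset ℤ) = {j, j + 1})).card ↔
      min (x 0) (x m) ≤ j ∧ j < max (x 0) (x m) := by
  induction m with
  | zero => simp
  | succ m ih =>
    have key := ih (fun i hi => hstep i (by omega))
    have hm : |x (m + 1) - x m| ≤ 1 := hstep m (by omega)
    rw [abs_le] at hm
    rw [Finset.range_add_one, Finset.filter_insert]
    by_cases hc : ({x m, x (m + 1)} : Finset ℤ) = {j, j + 1}
    · rw [if_pos hc, Finset.card_insert_of_notMem (by simp), Nat.odd_add_one, key]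
      rw [pair_eq_pair_iff'] at hc
      rcases hc with ⟨h1, h2⟩ | ⟨h1, h2⟩ <;> omega
    · rw [if_neg hc, key]
      rw [pair_eq_pair_iff'] at hc
      omega
end

section
/- Let j1 ≤ j2 ≤ j3 ≤ j4 be integers. Consider the three ways to pair them: M1 = {{j1,j2},{j3,j4}}, M2 = {{j1,j3},{j2,j4}}, M3 = {{j1,j4},{j2,j3}}. For every integer j, the parity of the number of pairs crossing column j (a pair {a,b} crosses j if min(a,b) ≤ j < max(a,b)) is the same in M1, M2, and M3; consequently the traversed-column metric f is equal for all three pairings. -/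
lemma crossings_pair (a b c d j : ℤ) :
    crossings ({(a, b), (c, d)} : Multiset (ℤ × ℤ)) j =
      (if min a b ≤ j ∧ j < max a b then 1 else 0) +
      (if min c d ≤ j ∧ j < max c d then 1 else 0) := by
  show Multiset.card (Multiset.filter _ ((a,b) ::ₘ (c,d) ::ₘ 0)) = _
  rw [Multiset.filter_cons, Multiset.filter_cons, Multiset.filter_zero]
  split <;> split <;> simp

theorem four_defect_pairings_same_metric (j₁ j₂ j₃ j₄ : ℤ)
    (h12 : j₁ ≤ j₂) (h23 : j₂ ≤ j₃) (h34 : j₃ ≤ j₄) :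
    (∀ j : ℤ,
      crossings ({(j₁, j₂), (j₃, j₄)} : Multiset (ℤ × ℤ)) j % 2 =
        crossings ({(j₁, j₃), (j₂, j₄)} : Multiset (ℤ × ℤ)) j % 2 ∧
      crossings ({(j₁, j₃), (j₂, j₄)} : Multiset (ℤ × ℤ)) j % 2 =
        crossings ({(j₁, j₄), (j₂, j₃)} : Multiset (ℤ × ℤ)) j % 2) ∧
    metricF ({(j₁, j₂), (j₃, j₄)} : Multiset (ℤ × ℤ)) =
      metricF ({(j₁, j₃), (j₂, j₄)} : Multiset (ℤ × ℤ)) ∧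
    metricF ({(j₁, j₃), (j₂, j₄)} : Multiset (ℤ × ℤ)) =
      metricF ({(j₁, j₄), (j₂, j₃)} : Multiset (ℤ × ℤ)) := by
  have key : ∀ j : ℤ,
      crossings ({(j₁, j₂), (j₃, j₄)} : Multiset (ℤ × ℤ)) j % 2 =
        crossings ({(j₁, j₃), (j₂, j₄)} : Multiset (ℤ × ℤ)) j % 2 ∧
      crossings ({(j₁, j₃), (j₂, j₄)} : Multiset (ℤ × ℤ)) j % 2 =
        crossings ({(j₁, j₄), (j₂, j₃)} : Multiset (ℤ × ℤ)) j % 2 := by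
    intro j
    rw [crossings_pair, crossings_pair, crossings_pair]
    rw [min_eq_left h12, max_eq_right h12, min_eq_left h34, max_eq_right h34,
      min_eq_left (h12.trans h23), max_eq_right (h12.trans h23),
      min_eq_left (h23.trans h34), max_eq_right (h23.trans h34),
      min_eq_left (h12.trans (h23.trans h34)), max_eq_right (h12.trans (h23.trans h34)),
      min_eq_left h23, max_eq_right h23]
    constructor <;> (split_ifs <;> omega)
  refine ⟨key, ?_, ?_⟩ <;>
  · unfold metricF
    congr 1
    ext j
    simp only [Set.mem_setOf_eq, Nat.odd_iff]
    have := key j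
    omega
end
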